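/- Let m ≥ 3 and let (D_i)_{i=0}^m be reals with D_0 = ‖C‖_∞, D_{m−1} = 0, D_m > 0, such that for m = 3 the triple (D_0, D_1, D_2) is concave, and for m ≥ 4 the second differences Δ_i^{(2)} := D_{i+1} + D_{i−1} − 2D_i satisfy Δ_i^{(2)} ≤ (m−1−i)Δ_{i+1}^{(2)} ≤ 0 for all i ∈ [m−3]. Define extended marginals r̄_k^{(2)} = [r_k, Σ_{i≠k} ‖r_i‖₁ − (m−1)s] ∈ ℝ^{n+1}_+ and the extended cost tensor C̄^{(2)} ∈ ℝ_+^{(n+1)^m} by C̄^{(2)}_v = C_v for v ∈ T_∅ and C̄^{(2)}_v = D_i for v ∈ T_S with |S| = i ∈ [m]. Then min_{X ∈ Π^s(r_1,…,r_m)} ⟨C, X⟩ = min_{X̄ ∈ Π(r̄_1^{(2)},…,r̄_m^{(2)})} ⟨C̄^{(2)}, X̄⟩. -/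

import Mathlib

/-!
Given `X ∈ Π^s(r)`, the unused capacity `r_k - c_k(X)` can be parked on the indices
`spike k j ∈ T_{[m] \ {k}}`, where the extended cost is `D_{m-1} = 0`; this gives an extended plan
of the same cost. Conversely, let `Ȳ ∈ Π(r̄^{(2)})` and let `X₀` be its restriction to `[n]^m`, of
mass `L₀`. Counting the coordinates equal to `n+1` shows `∑_S (m - 1 - |S|) Ȳ(T_S) = (m-1) s`, and
the conditions on the second differences make `D` concave on `[0, m-1]`, hence above its chord:
`(m-1-i) D_0 ≤ (m-1) D_i`. So the mass of `Ȳ` off `[n]^m` costs at least `D_0 (s - L₀)`, which pays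
for topping `X₀` up to mass `s` with a product plan on the residual marginals, since costs are at
most `D_0`; if instead `L₀ ≥ s`, `X₀` is scaled down to mass `s`.
-/

open Finset

noncomputable section

namespace MPOT

/-- The `k`-th marginal of a tensor indexed by `[n]^m` (functions `Fin m → Fin n`). -/
def marg {m n : ℕ} (X : (Fin m → Fin n) → ℝ) (k : Fin m) (j : Fin n) : ℝ :=
  ∑ v : Fin m → Fin n, if v k = j then X v else 0

/-- Entrywise (Frobenius) inner product of tensors. -/
def dot {m n : ℕ} (C X : (Fin m → Fin n) → ℝ) : ℝ :=
  ∑ v : Fin m → Fin n, C v * X v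

/-- The partial transport polytope `Π^s(r_1, …, r_m)`. -/
def PiPartial {m n : ℕ} (r : Fin m → Fin n → ℝ) (s : ℝ) :
    Set ((Fin m → Fin n) → ℝ) :=
  {X | (∀ v, 0 ≤ X v) ∧ (∀ k j, marg X k j ≤ r k j) ∧ ∑ v : Fin m → Fin n, X v = s}

/-- The transport polytope `Π(a_1, …, a_m)` with equality marginal constraints. -/
def PiEq {m n : ℕ} (a : Fin m → Fin n → ℝ) : Set ((Fin m → Fin n) → ℝ) :=
  {X | (∀ v, 0 ≤ X v) ∧ ∀ k j, marg X k j = a k j}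

/-- Embedding of `[n]^m` into `[n+1]^m`. -/
def emb {m n : ℕ} (v : Fin m → Fin n) : Fin m → Fin (n + 1) :=
  fun i => (v i).castSucc

/-- Restriction of a tensor on `[n+1]^m` to the indices in `[n]^m`. -/
def restr {m n : ℕ} (X : (Fin m → Fin (n + 1)) → ℝ) : (Fin m → Fin n) → ℝ :=
  fun v => X (emb v)

/-- The number of coordinates of `u` equal to `n+1` (i.e. `Fin.last n`); `u ∈ T_S`
with `|S| = nLast u`. -/
def nLast {m n : ℕ} (u : Fin m → Fin (n + 1)) : ℕ :=
  (univ.filter fun ℓ => u ℓ = Fin.last n).card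

/-- Extended cost tensor: the original cost on `T_∅ = [n]^m`, and value `A i` on the
`i`-th layer `∪_{|S| = i} T_S`. -/
def extCost {m n : ℕ} (C : (Fin m → Fin n) → ℝ) (A : ℕ → ℝ) :
    (Fin m → Fin (n + 1)) → ℝ :=
  fun u =>
    if h : ∀ i, u i ≠ Fin.last n then C fun i => (u i).castPred (h i)
    else A (nLast u)

/-- Total mass of `X` on the sublayer `T_S`. -/
def layerSum {m n : ℕ} (X : (Fin m → Fin (n + 1)) → ℝ) (S : Finset (Fin m)) : ℝ :=
  ∑ u : Fin m → Fin (n + 1), if ∀ ℓ, (u ℓ = Fin.last n ↔ ℓ ∈ S) then X u else 0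

/-- First-form extended marginals `r̄_k^{(1)} = [r_k, Σ_r/(m−1) − ‖r_k‖₁ − s/(m−1)]`. -/
def extMarg1 {m n : ℕ} (r : Fin m → Fin n → ℝ) (s : ℝ) : Fin m → Fin (n + 1) → ℝ :=
  fun k => Fin.snoc (r k)
    ((∑ i, ∑ j, r i j) / ((m : ℝ) - 1) - (∑ j, r k j) - s / ((m : ℝ) - 1))

/-- Second-form extended marginals `r̄_k^{(2)} = [r_k, Σ_{i≠k} ‖r_i‖₁ − (m−1)s]`. -/
def extMarg2 {m n : ℕ} (r : Fin m → Fin n → ℝ) (s : ℝ) : Fin m → Fin (n + 1) → ℝ :=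
  fun k => Fin.snoc (r k) ((∑ i ∈ univ.erase k, ∑ j, r i j) - ((m : ℝ) - 1) * s)

end MPOT

open MPOT

namespace MPOT

variable {m n : ℕ}

section Tensor

lemma marg_nonneg {X : (Fin m → Fin n) → ℝ} (hX : ∀ v, 0 ≤ X v) (k : Fin m) (j : Fin n) :
    0 ≤ marg X k j :=
  sum_nonneg fun v _ => by split_ifs <;> simp [hX v]

lemma sum_marg (X : (Fin m → Fin n) → ℝ) (k : Fin m) : ∑ j, marg X k j = ∑ v, X v := by
  unfold marg
  rw [sum_comm]
  simp

lemma marg_zero (k : Fin m) (j : Fin n) : marg (0 : (Fin m → Fin n) → ℝ) k j = 0 := by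
  simp [marg]

lemma marg_add (X Y : (Fin m → Fin n) → ℝ) (k : Fin m) (j : Fin n) :
    marg (X + Y) k j = marg X k j + marg Y k j := by
  simp only [marg, ← sum_add_distrib]
  exact sum_congr rfl fun v _ => by split_ifs <;> simp

lemma marg_smul (c : ℝ) (X : (Fin m → Fin n) → ℝ) (k : Fin m) (j : Fin n) :
    marg (c • X) k j = c * marg X k j := by
  simp only [marg, mul_sum]
  exact sum_congr rfl fun v _ => by split_ifs <;> simp

lemma dot_add (C X Y : (Fin m → Fin n) → ℝ) : dot C (X + Y) = dot C X + dot C Y := by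
  simp only [dot, ← sum_add_distrib, Pi.add_apply, mul_add]

lemma dot_smul (C : (Fin m → Fin n) → ℝ) (c : ℝ) (X : (Fin m → Fin n) → ℝ) :
    dot C (c • X) = c * dot C X := by
  simp only [dot, mul_sum, Pi.smul_apply, smul_eq_mul, mul_left_comm]

lemma dot_nonneg {C X : (Fin m → Fin n) → ℝ} (hC : ∀ v, 0 ≤ C v) (hX : ∀ v, 0 ≤ X v) :
    0 ≤ dot C X :=
  sum_nonneg fun v _ => mul_nonneg (hC v) (hX v)

lemma dot_le_mul_sum {C X : (Fin m → Fin n) → ℝ} {c : ℝ} (hC : ∀ v, C v ≤ c)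
    (hX : ∀ v, 0 ≤ X v) : dot C X ≤ c * ∑ v, X v := by
  rw [mul_sum]
  exact sum_le_sum fun v _ => mul_le_mul_of_nonneg_right (hC v) (hX v)

lemma marg_prod (f : Fin m → Fin n → ℝ) (k : Fin m) (j : Fin n) :
    marg (fun v => ∏ i, f i (v i)) k j = f k j * ∏ i ∈ univ.erase k, ∑ q, f i q := by
  set g : Fin m → Fin n → ℝ := fun i q => if i = k then (if q = j then f i q else 0) else f i q
  have hg : ∀ v : Fin m → Fin n, (if v k = j then ∏ i, f i (v i) else 0) = ∏ i, g i (v i) := by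
    intro v
    by_cases hv : v k = j
    · rw [if_pos hv]
      exact prod_congr rfl fun i _ => by by_cases hi : i = k <;> simp [g, hi, hv]
    · rw [if_neg hv, prod_eq_zero (mem_univ k) (by simp [g, hv])]
  unfold marg
  rw [sum_congr rfl fun v _ => hg v, ← Fintype.piFinset_univ, sum_prod_piFinset,
    ← mul_prod_erase univ _ (mem_univ k)]
  congr 1
  · simp [g]
  · exact prod_congr rfl fun i hi => by simp [g, ne_of_mem_erase hi]

lemma piPartial_nonempty {a : Fin m → Fin n → ℝ} (ha : ∀ k j, 0 ≤ a k j) {t : ℝ} (ht0 : 0 ≤ t)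
    (ht : ∀ k, t ≤ ∑ j, a k j) : (PiPartial a t).Nonempty := by
  rcases ht0.eq_or_lt with rfl | htpos
  · exact ⟨0, fun _ => le_rfl, fun k j => by simpa [marg_zero] using ha k j, by simp⟩
  have hS : ∀ k, 0 < ∑ j, a k j := fun k => htpos.trans_le (ht k)
  set f : Fin m → Fin n → ℝ := fun k j => a k j / ∑ q, a k q
  have hf : ∀ k, ∑ j, f k j = 1 := fun k => by rw [← sum_div, div_self (hS k).ne']
  refine ⟨t • fun v => ∏ k, f k (v k), fun v => ?_, fun k j => ?_, ?_⟩
  · exact mul_nonneg ht0 (prod_nonneg fun k _ => div_nonneg (ha k _) (hS k).le)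
  · rw [marg_smul, marg_prod, prod_congr rfl fun i _ => hf i, prod_const_one, mul_one]
    calc t * f k j = t / (∑ q, a k q) * a k j := by simp only [f]; ring
      _ ≤ a k j := mul_le_of_le_one_left (ha k j) (div_le_one_of_le₀ (ht k) (hS k).le)
  · simp only [Pi.smul_apply, smul_eq_mul, ← mul_sum, ← Fintype.piFinset_univ, sum_prod_piFinset,
      hf, prod_const_one, mul_one]

section PartialPlans

variable {C X₀ : (Fin m → Fin n) → ℝ} {r : Fin m → Fin n → ℝ} {s : ℝ}

lemma exists_mem_piPartial_of_le_mass (hC : ∀ v, 0 ≤ C v) (hX₀ : ∀ v, 0 ≤ X₀ v)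
    (hX₀r : ∀ k j, marg X₀ k j ≤ r k j) (hs0 : 0 ≤ s) (hs : s ≤ ∑ v, X₀ v) :
    ∃ X ∈ PiPartial r s, dot C X ≤ dot C X₀ := by
  have hc0 : 0 ≤ s / ∑ v, X₀ v := div_nonneg hs0 (hs0.trans hs)
  have hc1 : s / ∑ v, X₀ v ≤ 1 := div_le_one_of_le₀ hs (hs0.trans hs)
  refine ⟨(s / ∑ v, X₀ v) • X₀, ⟨fun v => mul_nonneg hc0 (hX₀ v), fun k j => ?_, ?_⟩, ?_⟩
  · rw [marg_smul]
    exact (mul_le_of_le_one_left (marg_nonneg hX₀ k j) hc1).trans (hX₀r k j)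
  · simp only [Pi.smul_apply, smul_eq_mul, ← mul_sum]
    exact div_mul_cancel_of_imp fun h => le_antisymm (h ▸ hs) hs0
  · rw [dot_smul]
    exact mul_le_of_le_one_left (dot_nonneg hC hX₀) hc1

lemma exists_mem_piPartial_of_mass_le {c : ℝ} (hC : ∀ v, C v ≤ c) (hX₀ : ∀ v, 0 ≤ X₀ v)
    (hX₀r : ∀ k j, marg X₀ k j ≤ r k j) (hs0 : ∑ v, X₀ v ≤ s) (hs : ∀ k, s ≤ ∑ j, r k j) :
    ∃ X ∈ PiPartial r s, dot C X ≤ dot C X₀ + c * (s - ∑ v, X₀ v) := by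
  obtain ⟨Z, hZ0, hZr, hZs⟩ := piPartial_nonempty (a := fun k j => r k j - marg X₀ k j)
    (fun k j => sub_nonneg.mpr (hX₀r k j)) (sub_nonneg.mpr hs0)
    (fun k => by linarith [hs k, sum_sub_distrib (s := univ) (r k) (marg X₀ k), sum_marg X₀ k])
  refine ⟨X₀ + Z, ⟨fun v => add_nonneg (hX₀ v) (hZ0 v), fun k j => ?_, ?_⟩, ?_⟩
  · rw [marg_add]
    linarith [hZr k j]
  · simp only [Pi.add_apply, sum_add_distrib, hZs]
    ring
  · rw [dot_add]
    linarith [hZs ▸ dot_le_mul_sum hC hZ0]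

end PartialPlans

end Tensor

lemma concave_seq_chord_le {D : ℕ → ℝ} {L : ℕ}
    (hD : ∀ j, j + 2 ≤ L → D j - D (j + 1) ≤ D (j + 1) - D (j + 2)) {i : ℕ} (hi : i ≤ L) :
    (L - i : ℝ) * D 0 + i * D L ≤ L * D i := by
  set d : ℕ → ℝ := fun j => D j - D (j + 1)
  have hmono : ∀ j k, j ≤ k → k + 1 ≤ L → d j ≤ d k := by
    intro j k hjk
    induction k, hjk using Nat.le_induction with
    | base => exact fun _ => le_rfl
    | succ k hjk ih => exact fun hk => (ih (by omega)).trans (hD k (by omega))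
  rcases hi.eq_or_lt with rfl | hi
  · simp
  have hhead : D 0 - D i ≤ i * d i := by
    have htel : ∑ j ∈ range i, d j = D 0 - D i := sum_range_sub' D i
    have := sum_le_card_nsmul (range i) d (d i) fun j hj => hmono j i (mem_range.mp hj).le hi
    rwa [htel, card_range, nsmul_eq_mul] at this
  have htail : (L - i) * d i ≤ D i - D L := by
    have htel : ∑ j ∈ Ico i L, d j = D i - D L := by
      have := sum_range_add_sum_Ico d hi.le
      simp only [d, sum_range_sub'] at this
      linarith
    have := card_nsmul_le_sum (Ico i L) d (d i) fun j hj =>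
      hmono i j (mem_Ico.mp hj).1 (mem_Ico.mp hj).2
    rwa [htel, nsmul_eq_mul, Nat.card_Ico, Nat.cast_sub hi.le] at this
  have hLi : (0 : ℝ) ≤ L - i := sub_nonneg.mpr (by exact_mod_cast hi.le)
  nlinarith [mul_le_mul_of_nonneg_left hhead hLi,
    mul_le_mul_of_nonneg_left htail (Nat.cast_nonneg (α := ℝ) i)]

section SecondForm

variable {D : ℕ → ℝ}

lemma concave_of_second_form (hm : 3 ≤ m)
    (hconc3 : m = 3 → D 2 + D 0 - 2 * D 1 ≤ 0)
    (hconc : 4 ≤ m → ∀ i, 1 ≤ i → i ≤ m - 3 →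
      D (i + 1) + D (i - 1) - 2 * D i
          ≤ ((m - 1 - i : ℕ) : ℝ) * (D (i + 2) + D i - 2 * D (i + 1)) ∧
        ((m - 1 - i : ℕ) : ℝ) * (D (i + 2) + D i - 2 * D (i + 1)) ≤ 0)
    (j : ℕ) (hj : j + 2 ≤ m - 1) : D j - D (j + 1) ≤ D (j + 1) - D (j + 2) := by
  rcases Nat.eq_zero_or_pos j with rfl | hj0
  · rcases hm.eq_or_lt with rfl | hm4
    · linarith [hconc3 rfl]
    · obtain ⟨h1, h2⟩ := hconc hm4 1 le_rfl (by omega)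
      norm_num at h1
      linarith
  · have hpos : (0 : ℝ) < ((m - 1 - j : ℕ) : ℝ) := by exact_mod_cast (by omega : 0 < m - 1 - j)
    linarith [nonpos_of_mul_nonpos_right (hconc (by omega) j hj0 (by omega)).2 hpos]

lemma chord_of_second_form (hm : 3 ≤ m) (hD0 : 0 ≤ D 0) (hDm1 : D (m - 1) = 0) (hDm : 0 < D m)
    (hconc3 : m = 3 → D 2 + D 0 - 2 * D 1 ≤ 0)
    (hconc : 4 ≤ m → ∀ i, 1 ≤ i → i ≤ m - 3 →
      D (i + 1) + D (i - 1) - 2 * D i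
          ≤ ((m - 1 - i : ℕ) : ℝ) * (D (i + 2) + D i - 2 * D (i + 1)) ∧
        ((m - 1 - i : ℕ) : ℝ) * (D (i + 2) + D i - 2 * D (i + 1)) ≤ 0)
    {i : ℕ} (hi : i ≤ m) : D 0 * ((m : ℝ) - 1 - i) ≤ ((m : ℝ) - 1) * D i ∧ 0 ≤ D i := by
  have hm1 : (2 : ℝ) ≤ m - 1 := by
    have : (3 : ℝ) ≤ m := by exact_mod_cast hm
    linarith
  rcases Nat.lt_or_ge i m with h | h
  · have hchord :=
      concave_seq_chord_le (concave_of_second_form hm hconc3 hconc) (Nat.le_sub_one_of_lt h)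
    rw [hDm1, Nat.cast_sub (by omega : 1 ≤ m), Nat.cast_one] at hchord
    have hi : (i : ℝ) ≤ m - 1 := by
      have : (i : ℝ) + 1 ≤ m := by exact_mod_cast h
      linarith
    refine ⟨by linarith, nonneg_of_mul_nonneg_right ?_ (by linarith : (0 : ℝ) < m - 1)⟩
    nlinarith
  · obtain rfl : i = m := le_antisymm hi h
    constructor <;> nlinarith

end SecondForm

section Extension

def pushforward {ι α : Type*} [Fintype ι] [DecidableEq α] (c : ι → α) (g : ι → ℝ) (a : α) : ℝ :=
  ∑ x, if c x = a then g x else 0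

lemma pushforward_nonneg {ι α : Type*} [Fintype ι] [DecidableEq α] (c : ι → α) {g : ι → ℝ}
    (hg : ∀ x, 0 ≤ g x) (a : α) : 0 ≤ pushforward c g a :=
  sum_nonneg fun x _ => by split_ifs <;> simp [hg x]

lemma marg_pushforward {ι : Type*} [Fintype ι] (c : ι → Fin m → Fin n) (g : ι → ℝ) (k : Fin m)
    (j : Fin n) : marg (pushforward c g) k j = ∑ x, if c x k = j then g x else 0 := by
  simp only [marg, pushforward, ite_sum_zero]
  rw [sum_comm]
  refine sum_congr rfl fun x _ => ?_
  rw [sum_eq_single (c x) (fun v _ hv => by simp [Ne.symm hv]) (by simp)]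
  simp

lemma dot_pushforward {ι : Type*} [Fintype ι] (F : (Fin m → Fin n) → ℝ) (c : ι → Fin m → Fin n)
    (g : ι → ℝ) : dot F (pushforward c g) = ∑ x, F (c x) * g x := by
  simp only [dot, pushforward, mul_sum, mul_ite, mul_zero]
  rw [sum_comm]
  simp

/-- The index of `T_{[m] \ {k}}` with entry `j` in slot `k`. -/
def spike (k : Fin m) (j : Fin n) : Fin m → Fin (n + 1) :=
  Function.update (fun _ => Fin.last n) k j.castSucc

lemma spike_apply_eq_last_iff {k i : Fin m} {j : Fin n} : spike k j i = Fin.last n ↔ i ≠ k := by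
  by_cases h : i = k <;> simp [spike, h, (Fin.castSucc_lt_last j).ne]

lemma spike_apply_eq_castSucc_iff {k i : Fin m} {j q : Fin n} :
    spike k j i = q.castSucc ↔ i = k ∧ j = q := by
  by_cases h : i = k <;> simp [spike, h, (Fin.castSucc_lt_last q).ne']

lemma nLast_spike (k : Fin m) (j : Fin n) : nLast (spike k j) = m - 1 := by
  simp [nLast, spike_apply_eq_last_iff, filter_ne']

lemma nLast_emb (v : Fin m → Fin n) : nLast (emb v) = 0 := by
  simp [nLast, emb, (Fin.castSucc_lt_last _).ne]

lemma nLast_le (u : Fin m → Fin (n + 1)) : nLast u ≤ m :=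
  (card_filter_le _ _).trans (by simp)

lemma extCost_emb (C : (Fin m → Fin n) → ℝ) (D : ℕ → ℝ) (v : Fin m → Fin n) :
    extCost C D (emb v) = C v := by
  simp [extCost, emb, (Fin.castSucc_lt_last _).ne]

lemma extCost_of_not_forall (C : (Fin m → Fin n) → ℝ) (D : ℕ → ℝ) {u : Fin m → Fin (n + 1)}
    (h : ¬ ∀ i, u i ≠ Fin.last n) : extCost C D u = D (nLast u) :=
  dif_neg h

lemma sum_eq_sum_emb_add (f : (Fin m → Fin (n + 1)) → ℝ) :
    ∑ u, f u = ∑ v, f (emb v) + ∑ u ∈ univ.filter (fun u => ¬ ∀ i, u i ≠ Fin.last n), f u := by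
  rw [← sum_filter_add_sum_filter_not univ (fun u => ∀ i, u i ≠ Fin.last n)]
  congr 1
  refine sum_bij' (fun u hu i => (u i).castPred ((mem_filter.mp hu).2 i)) (fun v _ => emb v)
    (fun _ _ => mem_univ _) (fun v _ => ?_) (fun u _ => ?_) (fun v _ => ?_) (fun u _ => ?_)
  · simp [emb, (Fin.castSucc_lt_last _).ne]
  · exact funext fun i => Fin.castSucc_castPred _ _
  · rfl
  · rfl

end Extension

section Completion

lemma extCost_spike (hm : 2 ≤ m) (C : (Fin m → Fin n) → ℝ) (D : ℕ → ℝ) (k : Fin m) (j : Fin n) :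
    extCost C D (spike k j) = D (m - 1) := by
  obtain ⟨i, hi⟩ := Fintype.exists_ne_of_one_lt_card (by simp; omega) k
  rw [extCost_of_not_forall C D fun h => h i (spike_apply_eq_last_iff.mpr hi), nLast_spike]

lemma sum_sub_marg {r : Fin m → Fin n → ℝ} {s : ℝ} {X : (Fin m → Fin n) → ℝ}
    (hX : X ∈ PiPartial r s) (k : Fin m) : ∑ j, (r k j - marg X k j) = ∑ j, r k j - s := by
  rw [sum_sub_distrib, sum_marg, hX.2.2]

lemma exists_mem_piEq_dot_eq (hm : 2 ≤ m) (C : (Fin m → Fin n) → ℝ) {D : ℕ → ℝ}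
    (hDm1 : D (m - 1) = 0) {r : Fin m → Fin n → ℝ} {s : ℝ} {X : (Fin m → Fin n) → ℝ}
    (hX : X ∈ PiPartial r s) : ∃ Y ∈ PiEq (extMarg2 r s), dot (extCost C D) Y = dot C X := by
  set w : Fin m × Fin n → ℝ := fun p => r p.1 p.2 - marg X p.1 p.2
  refine ⟨pushforward (Sum.elim emb fun p => spike p.1 p.2) (Sum.elim X w),
    ⟨pushforward_nonneg _ ?_, fun k p => ?_⟩, ?_⟩
  · rintro (v | p)
    exacts [hX.1 v, sub_nonneg.mpr (hX.2.1 _ _)]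
  · rw [marg_pushforward, Fintype.sum_sum_type]
    induction p using Fin.lastCases with
    | last =>
      have hemb : ∀ v : Fin m → Fin n, emb v k ≠ Fin.last n := fun v => (Fin.castSucc_lt_last _).ne
      rw [Fintype.sum_prod_type]
      simp only [Sum.elim_inl, Sum.elim_inr, hemb, if_false, sum_const_zero, zero_add,
        spike_apply_eq_last_iff, sum_ite_irrel, w, sum_sub_marg hX]
      rw [← sum_filter, filter_ne, sum_sub_distrib, sum_const, card_erase_of_mem (mem_univ k),
        card_univ, Fintype.card_fin, nsmul_eq_mul, Nat.cast_pred (by omega)]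
      simp [extMarg2]
    | cast q =>
      simp [emb, spike_apply_eq_castSucc_iff, extMarg2, Fintype.sum_prod_type, ite_and, w, marg]
  · rw [dot_pushforward, Fintype.sum_sum_type]
    simp [extCost_emb, extCost_spike hm, hDm1, dot]

end Completion

section Restriction

lemma marg_restr_le {Y : (Fin m → Fin (n + 1)) → ℝ} (hY : ∀ u, 0 ≤ Y u) (k : Fin m) (j : Fin n) :
    marg (restr Y) k j ≤ marg Y k j.castSucc := by
  unfold marg
  rw [sum_eq_sum_emb_add (fun u => if u k = j.castSucc then Y u else 0)]
  simp only [emb, restr, Fin.castSucc_inj]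
  exact le_add_of_nonneg_right (sum_nonneg fun u _ => by split_ifs <;> simp [hY u])

lemma dot_extCost (C : (Fin m → Fin n) → ℝ) (D : ℕ → ℝ) (Y : (Fin m → Fin (n + 1)) → ℝ) :
    dot (extCost C D) Y = dot C (restr Y)
      + ∑ u ∈ univ.filter (fun u => ¬ ∀ i, u i ≠ Fin.last n), D (nLast u) * Y u := by
  rw [dot, sum_eq_sum_emb_add]
  congr 1
  · simp [extCost_emb, dot, restr]
  · exact sum_congr rfl fun u hu => by rw [extCost_of_not_forall C D (mem_filter.mp hu).2]

lemma sum_nLast_mul (Y : (Fin m → Fin (n + 1)) → ℝ) :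
    ∑ u, (nLast u : ℝ) * Y u = ∑ k, marg Y k (Fin.last n) := by
  unfold marg nLast
  rw [sum_comm]
  refine sum_congr rfl fun u _ => ?_
  rw [← sum_filter, sum_const, nsmul_eq_mul]

variable {Y : (Fin m → Fin (n + 1)) → ℝ} {r : Fin m → Fin n → ℝ} {s : ℝ}

lemma sum_sub_nLast_mul (hm : 1 ≤ m) (hY : Y ∈ PiEq (extMarg2 r s)) :
    ∑ u, ((m : ℝ) - 1 - nLast u) * Y u = ((m : ℝ) - 1) * s := by
  have hmass : ∑ u, Y u = ∑ i, ∑ j, r i j - ((m : ℝ) - 1) * s := by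
    rw [← sum_marg Y ⟨0, hm⟩, sum_congr rfl fun p _ => hY.2 _ p, Fin.sum_univ_castSucc]
    simp only [extMarg2, mem_univ, sum_erase_eq_sub, Fin.snoc_castSucc, Fin.snoc_last]
    ring
  have hlast : ∑ u, (nLast u : ℝ) * Y u
      = ((m : ℝ) - 1) * ∑ i, ∑ j, r i j - m * ((m : ℝ) - 1) * s := by
    rw [sum_nLast_mul]
    simp only [hY.2, extMarg2, mem_univ, sum_erase_eq_sub, Fin.snoc_last, sum_sub_distrib,
      sum_const, card_univ, Fintype.card_fin, nsmul_eq_mul]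
    ring
  simp only [sub_mul, sum_sub_distrib, ← mul_sum, hmass, hlast]
  ring

variable {C : (Fin m → Fin n) → ℝ} {D : ℕ → ℝ}

lemma mul_sub_sum_restr_le (hm : 2 ≤ m)
    (hchord : ∀ i ≤ m, D 0 * ((m : ℝ) - 1 - i) ≤ ((m : ℝ) - 1) * D i)
    (hY : Y ∈ PiEq (extMarg2 r s)) :
    D 0 * (s - ∑ v, restr Y v)
      ≤ ∑ u ∈ univ.filter (fun u => ¬ ∀ i, u i ≠ Fin.last n), D (nLast u) * Y u := by
  have hm1 : (0 : ℝ) < m - 1 := by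
    have : (2 : ℝ) ≤ m := by exact_mod_cast hm
    linarith
  have hcount := sum_sub_nLast_mul (by omega) hY
  rw [sum_eq_sum_emb_add] at hcount
  simp only [nLast_emb, Nat.cast_zero, sub_zero, ← mul_sum] at hcount
  refine le_of_mul_le_mul_left ?_ hm1
  calc ((m : ℝ) - 1) * (D 0 * (s - ∑ v, restr Y v))
      = ∑ u ∈ univ.filter (fun u => ¬ ∀ i, u i ≠ Fin.last n),
          D 0 * (((m : ℝ) - 1 - nLast u) * Y u) := by
        rw [← mul_sum, eq_sub_of_add_eq' hcount]
        simp only [restr]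
        ring
    _ ≤ ∑ u ∈ univ.filter (fun u => ¬ ∀ i, u i ≠ Fin.last n),
          ((m : ℝ) - 1) * (D (nLast u) * Y u) := by
        refine sum_le_sum fun u _ => ?_
        rw [← mul_assoc, ← mul_assoc]
        exact mul_le_mul_of_nonneg_right (hchord _ (nLast_le u)) (hY.1 u)
    _ = ((m : ℝ) - 1) * ∑ u ∈ univ.filter (fun u => ¬ ∀ i, u i ≠ Fin.last n),
          D (nLast u) * Y u := by rw [mul_sum]

lemma exists_mem_piPartial_dot_le (hm : 2 ≤ m) (hC : ∀ v, 0 ≤ C v) (hCD : ∀ v, C v ≤ D 0)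
    (hchord : ∀ i ≤ m, D 0 * ((m : ℝ) - 1 - i) ≤ ((m : ℝ) - 1) * D i)
    (hD : ∀ i ≤ m, 0 ≤ D i) (hs0 : 0 ≤ s) (hs : ∀ k, s ≤ ∑ j, r k j)
    (hY : Y ∈ PiEq (extMarg2 r s)) :
    ∃ X ∈ PiPartial r s, dot C X ≤ dot (extCost C D) Y := by
  have hX₀ : ∀ v, 0 ≤ restr Y v := fun v => hY.1 _
  have hX₀r : ∀ k j, marg (restr Y) k j ≤ r k j := fun k j =>
    (marg_restr_le hY.1 k j).trans_eq (by simp [hY.2, extMarg2])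
  rw [dot_extCost]
  rcases le_total s (∑ v, restr Y v) with h | h
  · obtain ⟨X, hX, hle⟩ := exists_mem_piPartial_of_le_mass hC hX₀ hX₀r hs0 h
    refine ⟨X, hX, hle.trans (le_add_of_nonneg_right (sum_nonneg fun u _ => ?_))⟩
    exact mul_nonneg (hD _ (nLast_le u)) (hY.1 u)
  · obtain ⟨X, hX, hle⟩ := exists_mem_piPartial_of_mass_le hCD hX₀ hX₀r h hs
    exact ⟨X, hX, hle.trans (by linarith [mul_sub_sum_restr_le hm hchord hY])⟩

end Restriction

end MPOT

theorem mpot_equivalence_second_form_general {m n : ℕ} (hm : 3 ≤ m)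
    (C : (Fin m → Fin n) → ℝ) (hC : ∀ v, 0 ≤ C v)
    (r : Fin m → Fin n → ℝ)
    (s : ℝ) (hs0 : 0 ≤ s) (hs : ∀ k, s ≤ ∑ j, r k j)
    (D : ℕ → ℝ) (hD0 : IsGreatest (Set.range C) (D 0))
    (hDm1 : D (m - 1) = 0) (hDm : 0 < D m)
    (hconc3 : m = 3 → D 2 + D 0 - 2 * D 1 ≤ 0)
    (hconc : 4 ≤ m → ∀ i, 1 ≤ i → i ≤ m - 3 →
      D (i + 1) + D (i - 1) - 2 * D i
          ≤ ((m - 1 - i : ℕ) : ℝ) * (D (i + 2) + D i - 2 * D (i + 1)) ∧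
        ((m - 1 - i : ℕ) : ℝ) * (D (i + 2) + D i - 2 * D (i + 1)) ≤ 0) :
    sInf ((fun X => dot C X) '' PiPartial r s)
      = sInf ((fun Y => dot (extCost C D) Y) '' PiEq (extMarg2 r s)) := by
  have hCD : ∀ v, C v ≤ D 0 := fun v => hD0.2 ⟨v, rfl⟩
  have hD0nn : 0 ≤ D 0 := by
    obtain ⟨v, hv⟩ := hD0.1
    exact hv ▸ hC v
  have hchord := fun i (hi : i ≤ m) => chord_of_second_form hm hD0nn hDm1 hDm hconc3 hconc hi
  refine csInf_eq_csInf_of_forall_exists_le ?_ ?_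
  · rintro _ ⟨X, hX, rfl⟩
    obtain ⟨Y, hY, hYX⟩ := exists_mem_piEq_dot_eq (by omega) C hDm1 hX
    exact ⟨_, ⟨Y, hY, rfl⟩, hYX.le⟩
  · rintro _ ⟨Y, hY, rfl⟩
    obtain ⟨X, hX, hXY⟩ := exists_mem_piPartial_dot_le (by omega) hC hCD
      (fun i hi => (hchord i hi).1) (fun i hi => (hchord i hi).2) hs0 hs hY
    exact ⟨_, ⟨X, hX, rfl⟩, hXY⟩

/-- Theorem 3.2, second equivalent form: with a sequence `(D_i)` satisfying
`D_0 = ‖C‖_∞`, `D_{m−1} = 0`, `D_m > 0`, concavity of `(D_0, D_1, D_2)` when `m = 3`, and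
`Δ_i^{(2)} ≤ (m−1−i)Δ_{i+1}^{(2)} ≤ 0` for `i ∈ [m−3]` when `m ≥ 4`, the multimarginal
partial optimal transport problem equals the multimarginal optimal transport problem with
extended marginals `r̄_k^{(2)}` and extended cost `C̄^{(2)}`. -/
theorem mpot_equivalence_second_form {m n : ℕ} (hm : 3 ≤ m) (hn : 1 ≤ n)
    (C : (Fin m → Fin n) → ℝ) (hC : ∀ v, 0 ≤ C v)
    (r : Fin m → Fin n → ℝ) (hr : ∀ k j, 0 ≤ r k j)
    (s : ℝ) (hs0 : 0 ≤ s) (hs : ∀ k, s ≤ ∑ j, r k j)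
    (D : ℕ → ℝ) (hD0 : IsGreatest (Set.range C) (D 0))
    (hDm1 : D (m - 1) = 0) (hDm : 0 < D m)
    (hconc3 : m = 3 → D 2 + D 0 - 2 * D 1 ≤ 0)
    (hconc : 4 ≤ m → ∀ i, 1 ≤ i → i ≤ m - 3 →
      D (i + 1) + D (i - 1) - 2 * D i
          ≤ ((m - 1 - i : ℕ) : ℝ) * (D (i + 2) + D i - 2 * D (i + 1)) ∧
        ((m - 1 - i : ℕ) : ℝ) * (D (i + 2) + D i - 2 * D (i + 1)) ≤ 0) :
    sInf ((fun X => dot C X) '' PiPartial r s)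
      = sInf ((fun Y => dot (extCost C D) Y) '' PiEq (extMarg2 r s)) :=
  mpot_equivalence_second_form_general hm C hC r s hs0 hs D hD0 hDm1 hDm hconc3 hconc
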